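/- Let V be a Jordan bimodule over Kan(n). If a is an odd homogeneous basis element of Kan(n) of the form e_I or \bar{e_I} with a ≠ \bar{1}, then R_a^2 = 0 on V. -/

import Mathlib

open Finset in
/-- The Grassmann algebra `G_n` on `n` odd generators, realized as coefficient
functions on subsets of `{1,...,n}` (the basis is `e_I`, `I ⊆ {1,...,n}`). -/
abbrev Gn (n : ℕ) (F : Type) := Finset (Fin n) → F

/-- The sign `(-1)^{#{(i,j) ∈ I×J : j < i}}` arising when multiplying `e_I · e_J`. -/
def gsign {n : ℕ} (I J : Finset (Fin n)) : ℤ :=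
  (-1) ^ (((I ×ˢ J).filter (fun p => p.2 < p.1)).card)

/-- Multiplication in the Grassmann algebra `G_n`. -/
def gmul {F : Type} [Field F] {n : ℕ} (f g : Gn n F) : Gn n F :=
  fun K => ∑ I ∈ K.powerset, (gsign I (K \ I) : F) * f I * g (K \ I)

/-- The odd superderivation `∂/∂e_j` of `G_n`. -/
def pd {F : Type} [Field F] {n : ℕ} (j : Fin n) (f : Gn n F) : Gn n F :=
  fun I => if j ∈ I then 0 else ((-1 : F) ^ ((I.filter (fun i => i < j)).card)) * f (insert j I)

/-- The grade involution of `G_n`: `e_I ↦ (-1)^{|I|} e_I`. -/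
def gInv {F : Type} [Field F] {n : ℕ} (f : Gn n F) : Gn n F :=
  fun I => ((-1 : F) ^ I.card) * f I

/-- The Poisson bracket `{f,g} = (-1)^{|f|} ∑_i (∂f/∂e_i)(∂g/∂e_i)` of `G_n`
(the sign `(-1)^{|f|}` is incorporated bilinearly via the grade involution). -/
def gbr {F : Type} [Field F] {n : ℕ} (f g : Gn n F) : Gn n F :=
  ∑ i : Fin n, gmul (pd i (gInv f)) (pd i g)

/-- `f ∈ G_n` is homogeneous of parity `p`. -/
def homog {F : Type} [Field F] {n : ℕ} (p : ZMod 2) (f : Gn n F) : Prop :=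
  ∀ I : Finset (Fin n), ((I.card : ZMod 2) ≠ p) → f I = 0

/-- `(-1)^p` as an element of the field `F`, for `p : ZMod 2`. -/
def sgn (F : Type) [Field F] (p : ZMod 2) : F := if p = 0 then 1 else -1
/-- The Kantor double `Kan(n) = J(G_n) = G_n ⊕ \bar{G_n}`: an element `(a,b)`
represents `a + \bar{b}`. -/
abbrev Kan (n : ℕ) (F : Type) := Gn n F × Gn n F

/-- Multiplication of the Kantor double `Kan(n)`; the signs `(-1)^{|g|}` of the
Kantor doubling process are incorporated bilinearly via the grade involution. -/
def kmul {F : Type} [Field F] {n : ℕ} (x y : Kan n F) : Kan n F :=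
  (gmul x.1 y.1 + gbr x.2 (gInv y.2), gmul x.1 y.2 + gmul x.2 (gInv y.1))

/-- The basis element `e_I` of `G_n` (coefficient `1` at `I`). -/
def single {F : Type} [Field F] {n : ℕ} (I : Finset (Fin n)) : Gn n F :=
  fun J => if J = I then 1 else 0

/-- The element `e_I ∈ Kan(n)`. -/
def eK {F : Type} [Field F] {n : ℕ} (I : Finset (Fin n)) : Kan n F := (single I, 0)

/-- The element `\bar{e_I} ∈ Kan(n)`. In particular `beK ∅ = \bar{1}`. -/
def beK {F : Type} [Field F] {n : ℕ} (I : Finset (Fin n)) : Kan n F := (0, single I)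

/-- Homogeneity of parity `p` in `Kan(n)` (the bar flips parity). -/
def kHomog {F : Type} [Field F] {n : ℕ} (p : ZMod 2) (x : Kan n F) : Prop :=
  homog p x.1 ∧ homog (p + 1) x.2

/-- Even part of an element of `G_n`. -/
def evenP {F : Type} [Field F] {n : ℕ} (f : Gn n F) : Gn n F :=
  fun I => if (I.card : ZMod 2) = 0 then f I else 0

/-- Odd part of an element of `G_n`. -/
def oddP {F : Type} [Field F] {n : ℕ} (f : Gn n F) : Gn n F :=
  fun I => if (I.card : ZMod 2) = 1 then f I else 0

/-- Even part of an element of `Kan(n)`. -/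
def kEvenPart {F : Type} [Field F] {n : ℕ} (x : Kan n F) : Kan n F := (evenP x.1, oddP x.2)

/-- Odd part of an element of `Kan(n)`. -/
def kOddPart {F : Type} [Field F] {n : ℕ} (x : Kan n F) : Kan n F := (oddP x.1, evenP x.2)

/-- A super vector space is encoded as a product `V0 × V1`; homogeneity of parity `p`. -/
def vHomog {V0 V1 : Type} [Zero V0] [Zero V1] (p : ZMod 2) (v : V0 × V1) : Prop :=
  if p = 0 then v.2 = 0 else v.1 = 0

/-- The left action of `Kan(n)` on a superbimodule determined from the right action
`act` by supercommutativity: `a·v = (-1)^{|a||v|} v·a` for homogeneous `a, v`. -/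
def leftAct {F : Type} [Field F] {n : ℕ} {V0 V1 : Type} [AddCommGroup V0] [Module F V0]
    [AddCommGroup V1] [Module F V1]
    (act : V0 × V1 →ₗ[F] Kan n F →ₗ[F] V0 × V1) (x : Kan n F) (w : V0 × V1) : V0 × V1 :=
  act w (kEvenPart x) + act ((w.1, 0) : V0 × V1) (kOddPart x)
    - act ((0, w.2) : V0 × V1) (kOddPart x)

/-- Multiplication in the split null extension `E = Kan(n) ⊕ V`. -/
def emul {F : Type} [Field F] {n : ℕ} {V0 V1 : Type} [AddCommGroup V0] [Module F V0]
    [AddCommGroup V1] [Module F V1]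
    (act : V0 × V1 →ₗ[F] Kan n F →ₗ[F] V0 × V1)
    (z w : Kan n F × (V0 × V1)) : Kan n F × (V0 × V1) :=
  (kmul z.1 w.1, act z.2 w.1 + leftAct act z.1 w.2)

/-- Homogeneity in the split null extension. -/
def eHomog {F : Type} [Field F] {n : ℕ} {V0 V1 : Type} [AddCommGroup V0] [Module F V0]
    [AddCommGroup V1] [Module F V1] (p : ZMod 2) (z : Kan n F × (V0 × V1)) : Prop :=
  kHomog p z.1 ∧ vHomog p z.2

/-- A supercommutative superalgebra structure `mul` (with homogeneity predicate `hom`)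
is Jordan: supercommutativity and the linearized super Jordan identity hold for
homogeneous elements. -/
def JordanSuper (F : Type) [Field F] {E : Type} [AddCommGroup E] [Module F E]
    (hom : ZMod 2 → E → Prop) (mul : E → E → E) : Prop :=
  (∀ (p q : ZMod 2) (x y : E), hom p x → hom q y → mul x y = sgn F (p * q) • mul y x) ∧
  (∀ (px py pz pt : ZMod 2) (x y z t : E),
      hom px x → hom py y → hom pz z → hom pt t →
      mul (mul (mul x y) z) t
        + sgn F (py * pz + py * pt + pz * pt) • mul (mul (mul x t) z) y
        + sgn F (px * py + px * pz + px * pt + pz * pt) • mul (mul (mul y t) z) x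
      = mul (mul x y) (mul z t) + sgn F (py * pz) • mul (mul x z) (mul y t)
        + sgn F (pt * (py + pz)) • mul (mul x t) (mul y z))

/-- `V = V0 ⊕ V1` with right action `act` is a Jordan superbimodule over `Kan(n)`:
the split null extension `Kan(n) ⊕ V` is a (graded) Jordan superalgebra. -/
def IsJordanBimod {F : Type} [Field F] {n : ℕ} {V0 V1 : Type} [AddCommGroup V0] [Module F V0]
    [AddCommGroup V1] [Module F V1]
    (act : V0 × V1 →ₗ[F] Kan n F →ₗ[F] V0 × V1) : Prop :=
  JordanSuper F (E := Kan n F × (V0 × V1)) eHomog (emul act) ∧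
  (∀ (p q : ZMod 2) (z w : Kan n F × (V0 × V1)),
      eHomog p z → eHomog q w → eHomog (p + q) (emul act z w))

/-!
Specialise the linearized Jordan identity of the split null extension `Kan(n) ⊕ V` to
`(x, y, u, t)` with `x, y, t ∈ Kan(n)` homogeneous, `t` odd and `u ∈ V` homogeneous. If
`xy = εt` with `ε ≠ 0` and `xt = yt = 0`, only two terms survive and they differ by the sign
`(-1)^{|u|}` versus `(-1)^{|u|+1}`: `ε R_t² u = -ε R_t² u`, so `R_t² = 0` as `char F ≠ 2`.
This handles `t = \bar{e_I}` (`x = e_I`, `y = \bar 1`) and `t = e_I` with `|I| ≥ 3`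
(`x = e_j`, `y = e_{I∖j}`). For `a = e_i` pick `j ≠ i` and take `x = e_i`, `y = \bar{e_j}`,
`t = \bar{e_{ij}}`: now `yt = μ e_i` with `μ ≠ 0`, and since `R_t² = 0` is already known the
identity reduces to `μ R_a² u = -μ R_a² u`.
-/

open Finset

section Signs

variable {F : Type} [Field F]

lemma eq_zero_of_smul_eq_neg_smul {M : Type} [AddCommGroup M] [Module F M] (h2 : (2 : F) ≠ 0)
    {c : F} (hc : c ≠ 0) {w : M} (h : c • w = -(c • w)) : w = 0 := by
  have : (2 * c) • w = 0 := by
    rw [mul_smul, two_smul]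
    nth_rewrite 1 [h]
    exact neg_add_cancel _
  exact (smul_eq_zero.mp this).resolve_left (mul_ne_zero h2 hc)

lemma sgn_zero : sgn F 0 = 1 := if_pos rfl

lemma sgn_one : sgn F 1 = -1 := if_neg one_ne_zero

lemma sgn_ne_zero (p : ZMod 2) : sgn F p ≠ 0 := by
  unfold sgn
  split_ifs <;> simp

lemma sgn_add_one (p : ZMod 2) : sgn F (p + 1) = -sgn F p := by
  obtain rfl | rfl : p = 0 ∨ p = 1 := by revert p; decide
  · rw [zero_add, sgn_zero, sgn_one]
  · rw [show (1 + 1 : ZMod 2) = 0 from rfl, sgn_zero, sgn_one, neg_neg]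

end Signs

section Grassmann

variable {F : Type} [Field F] {n : ℕ}

lemma gsign_cast_ne_zero (I J : Finset (Fin n)) : (gsign I J : F) ≠ 0 := by
  simp [gsign]

lemma gmul_single_of_disjoint {I J : Finset (Fin n)} (h : Disjoint I J) :
    gmul (single I) (single J) = (gsign I J : F) • (single (I ∪ J) : Gn n F) := by
  funext K
  simp only [gmul, single, Pi.smul_apply, smul_eq_mul, mul_ite, mul_one, mul_zero]
  by_cases hK : K = I ∪ J
  · subst hK
    rw [Finset.sum_eq_single I (fun b _ hb => by simp [hb]) (fun hI => absurd
      (Finset.mem_powerset.mpr Finset.subset_union_left) hI)]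
    simp [Finset.union_sdiff_cancel_left h]
  · refine (Finset.sum_eq_zero fun b hb => ?_).trans (if_neg hK).symm
    rcases eq_or_ne b I with rfl | hbI
    · have : K \ b ≠ J := fun hKJ => hK <| by
        rw [← hKJ, Finset.union_sdiff_of_subset (Finset.mem_powerset.mp hb)]
      simp [this]
    · simp [hbI]

lemma gmul_single_of_not_disjoint {I J : Finset (Fin n)} (h : ¬ Disjoint I J) :
    gmul (single I) (single J) = (0 : Gn n F) := by
  funext K
  refine Finset.sum_eq_zero fun b _ => ?_
  by_cases hb : b = I
  · have : K \ b ≠ J := by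
      rintro rfl
      exact h (hb ▸ Finset.sdiff_disjoint.symm)
    simp [single, this]
  · simp [single, hb]

lemma gInv_single (I : Finset (Fin n)) :
    gInv (single I : Gn n F) = ((-1 : F) ^ #I) • single I := by
  funext J
  by_cases h : J = I <;> simp [gInv, single, h]

lemma pd_single_of_notMem {j : Fin n} {K : Finset (Fin n)} (hj : j ∉ K) :
    pd j (single K : Gn n F) = 0 := by
  funext I
  have : insert j I ≠ K := fun h => hj (h ▸ Finset.mem_insert_self j I)
  simp [pd, single, this]

lemma pd_single_of_mem {j : Fin n} {K : Finset (Fin n)} (hj : j ∈ K) :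
    pd j (single K : Gn n F) =
      ((-1 : F) ^ #((K.erase j).filter (· < j))) • single (K.erase j) := by
  funext I
  by_cases hjI : j ∈ I
  · have : I ≠ K.erase j := by
      rintro rfl
      exact Finset.notMem_erase j K hjI
    simp [pd, single, hjI, this]
  · have : insert j I = K ↔ I = K.erase j :=
      ⟨fun h => by rw [← h, Finset.erase_insert hjI],
        fun h => by rw [h, Finset.insert_erase hj]⟩
    by_cases hI : I = K.erase j
    · subst hI
      simp [pd, single, hjI, this]
    · simp [pd, single, hjI, this, hI]

lemma pd_smul (j : Fin n) (c : F) (f : Gn n F) : pd j (c • f) = c • pd j f := by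
  funext I
  by_cases hjI : j ∈ I <;> simp [pd, hjI, mul_left_comm]

lemma gmul_zero_left (g : Gn n F) : gmul 0 g = 0 := by
  funext K
  simp [gmul]

lemma gmul_smul_left (c : F) (f g : Gn n F) : gmul (c • f) g = c • gmul f g := by
  funext K
  simp only [gmul, Pi.smul_apply, smul_eq_mul, Finset.mul_sum]
  exact Finset.sum_congr rfl fun _ _ => by ring

lemma gmul_smul_right (c : F) (f g : Gn n F) : gmul f (c • g) = c • gmul f g := by
  funext K
  simp only [gmul, Pi.smul_apply, smul_eq_mul, Finset.mul_sum]
  exact Finset.sum_congr rfl fun _ _ => by ring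

lemma gbr_smul_right (c : F) (f g : Gn n F) : gbr f (c • g) = c • gbr f g := by
  simp only [gbr, Finset.smul_sum, pd_smul, gmul_smul_right]

lemma gmul_single_empty_left (g : Gn n F) : gmul (single ∅) g = g := by
  funext K
  rw [gmul, Finset.sum_eq_single ∅ (fun b _ hb => by simp [single, hb])
    (fun h => absurd (Finset.empty_mem_powerset K) h)]
  simp [single, gsign]

lemma gbr_single_empty (g : Gn n F) : gbr (single ∅) g = 0 := by
  refine Finset.sum_eq_zero fun i _ => ?_
  rw [gInv_single, pd_smul, pd_single_of_notMem (Finset.notMem_empty i), smul_zero,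
    gmul_zero_left]

lemma gbr_single_singleton {j : Fin n} {K : Finset (Fin n)} (hj : j ∈ K) :
    gbr (single {j}) (single K : Gn n F)
      = (-(-1 : F) ^ #((K.erase j).filter (· < j))) • single (K.erase j) := by
  have hpd (i : Fin n) : pd i (gInv (single {j} : Gn n F)) = -pd i (single {j}) := by
    rw [gInv_single, Finset.card_singleton, pow_one, pd_smul, neg_one_smul]
  rw [gbr, Finset.sum_eq_single j (fun i _ hij => by
      rw [hpd, pd_single_of_notMem (by simpa using hij), neg_zero, gmul_zero_left])
    (fun h => absurd (Finset.mem_univ j) h)]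
  rw [hpd, pd_single_of_mem (Finset.mem_singleton_self j), pd_single_of_mem hj,
    Finset.erase_singleton, ← neg_one_smul F, smul_smul, gmul_smul_left,
    gmul_single_empty_left]
  simp [smul_smul]

end Grassmann

section Kantor

variable {F : Type} [Field F] {n : ℕ}

@[simp] lemma kmul_zero_left (y : Kan n F) : kmul 0 y = 0 := by
  ext K <;> simp [kmul, gmul, gbr, gInv, pd]

@[simp] lemma kmul_zero_right (x : Kan n F) : kmul x 0 = 0 := by
  ext K <;> simp [kmul, gmul, gbr, gInv, pd]

lemma kmul_eK_eK (I J : Finset (Fin n)) :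
    kmul (eK I) (eK J) = ((gmul (single I) (single J) : Gn n F), 0) := by
  ext K <;> simp [kmul, eK, gmul, gbr, gInv, pd]

lemma kmul_eK_beK (I J : Finset (Fin n)) :
    kmul (eK I) (beK J) = (0, (gmul (single I) (single J) : Gn n F)) := by
  ext K <;> simp [kmul, eK, beK, gmul, gbr, gInv, pd]

lemma kmul_beK_beK (I J : Finset (Fin n)) :
    kmul (beK I) (beK J) = ((gbr (single I) (gInv (single J)) : Gn n F), 0) := by
  ext K <;> simp [kmul, beK, gmul, gInv]

lemma kmul_eK_eK_of_disjoint {I J : Finset (Fin n)} (h : Disjoint I J) :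
    kmul (eK I : Kan n F) (eK J) = (gsign I J : F) • eK (I ∪ J) := by
  rw [kmul_eK_eK, gmul_single_of_disjoint h]
  simp [eK]

lemma kmul_eK_eK_of_not_disjoint {I J : Finset (Fin n)} (h : ¬ Disjoint I J) :
    kmul (eK I : Kan n F) (eK J) = 0 := by
  rw [kmul_eK_eK, gmul_single_of_not_disjoint h]
  rfl

lemma kmul_eK_beK_of_disjoint {I J : Finset (Fin n)} (h : Disjoint I J) :
    kmul (eK I : Kan n F) (beK J) = (gsign I J : F) • beK (I ∪ J) := by
  rw [kmul_eK_beK, gmul_single_of_disjoint h]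
  simp [beK]

lemma kmul_eK_beK_of_not_disjoint {I J : Finset (Fin n)} (h : ¬ Disjoint I J) :
    kmul (eK I : Kan n F) (beK J) = 0 := by
  rw [kmul_eK_beK, gmul_single_of_not_disjoint h]
  rfl

lemma kmul_beK_empty_beK (K : Finset (Fin n)) : kmul (beK ∅) (beK K) = (0 : Kan n F) := by
  rw [kmul_beK_beK, gbr_single_empty]
  rfl

lemma kmul_beK_singleton_beK {j : Fin n} {K : Finset (Fin n)} (hj : j ∈ K) :
    kmul (beK {j}) (beK K)
      = (-(-1 : F) ^ (#K + #((K.erase j).filter (· < j)))) • (eK (K.erase j) : Kan n F) := by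
  rw [kmul_beK_beK, gInv_single, gbr_smul_right, gbr_single_singleton hj]
  simp [eK, smul_smul, pow_add]

lemma kHomog_eK (I : Finset (Fin n)) : kHomog (#I : ZMod 2) (eK I : Kan n F) :=
  ⟨fun J hJ => if_neg (by rintro rfl; exact hJ rfl), fun _ _ => rfl⟩

lemma kHomog_beK (I : Finset (Fin n)) : kHomog (#I + 1 : ZMod 2) (beK I : Kan n F) := by
  refine ⟨fun _ _ => rfl, fun J hJ => if_neg ?_⟩
  rintro rfl
  exact hJ (by rw [add_assoc, show (1 + 1 : ZMod 2) = 0 from rfl, add_zero])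

lemma kHomog_zero (p : ZMod 2) : kHomog p (0 : Kan n F) :=
  ⟨fun _ _ => rfl, fun _ _ => rfl⟩

lemma kHomog.smul {p : ZMod 2} {x : Kan n F} (hx : kHomog p x) (c : F) : kHomog p (c • x) :=
  ⟨fun I hI => by simp [hx.1 I hI], fun I hI => by simp [hx.2 I hI]⟩

lemma kEvenPart_of_kHomog_one {x : Kan n F} (hx : kHomog 1 x) : kEvenPart x = 0 := by
  have h2 : homog 0 x.2 := hx.2
  ext I
  · simpa [kEvenPart, evenP] using fun h => hx.1 I (by simp [h])
  · simpa [kEvenPart, oddP] using fun h => h2 I (by simp [h])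

lemma kOddPart_of_kHomog_one {x : Kan n F} (hx : kHomog 1 x) : kOddPart x = x := by
  have h2 : homog 0 x.2 := hx.2
  ext I
  · simpa [kOddPart, oddP] using fun h => (hx.1 I h).symm
  · simpa [kOddPart, evenP] using fun h => (h2 I h).symm

end Kantor

section Bimodule

variable {F : Type} [Field F] {n : ℕ} {V0 V1 : Type} [AddCommGroup V0] [Module F V0]
  [AddCommGroup V1] [Module F V1] (act : V0 × V1 →ₗ[F] Kan n F →ₗ[F] V0 × V1)

lemma vHomog_zero (p : ZMod 2) : vHomog p (0 : V0 × V1) := by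
  unfold vHomog
  split_ifs <;> rfl

@[simp] lemma leftAct_zero_left (w : V0 × V1) : leftAct act 0 w = 0 := by
  rw [leftAct, kEvenPart_of_kHomog_one (kHomog_zero 1), kOddPart_of_kHomog_one (kHomog_zero 1)]
  simp

@[simp] lemma leftAct_zero_right (x : Kan n F) : leftAct act x 0 = 0 := by
  simp [leftAct]

lemma leftAct_of_kHomog_one {x : Kan n F} (hx : kHomog 1 x) {p : ZMod 2} {w : V0 × V1}
    (hw : vHomog p w) : leftAct act x w = sgn F p • act w x := by
  rw [leftAct, kEvenPart_of_kHomog_one hx, kOddPart_of_kHomog_one hx, map_zero, zero_add]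
  obtain ⟨w1, w2⟩ := w
  by_cases hp : p = 0
  · obtain rfl : w2 = 0 := by simpa [vHomog, hp] using hw
    simp [sgn, hp, Prod.mk_zero_zero]
  · obtain rfl : w1 = 0 := by simpa [vHomog, hp] using hw
    simp [sgn, hp, Prod.mk_zero_zero]

@[simp] lemma emul_inl_inl (a b : Kan n F) :
    emul act (a, 0) (b, 0) = (kmul a b, 0) := by
  simp [emul]

@[simp] lemma emul_inl_inr (a : Kan n F) (w : V0 × V1) :
    emul act (a, 0) (0, w) = (0, leftAct act a w) := by
  simp [emul]

@[simp] lemma emul_inr_inl (w : V0 × V1) (b : Kan n F) :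
    emul act (0, w) (b, 0) = (0, act w b) := by
  simp [emul]

lemma vHomog_act (hJ : IsJordanBimod act) {p q : ZMod 2} {v : V0 × V1} {x : Kan n F}
    (hv : vHomog p v) (hx : kHomog q x) : vHomog (p + q) (act v x) := by
  simpa using (hJ.2 p q (0, v) (x, 0) ⟨kHomog_zero p, hv⟩ ⟨hx, vHomog_zero q⟩).2

-- The `V`-component of the Jordan identity of `Kan(n) ⊕ V` at `(x, y, u, t)` with `u ∈ V`.
lemma act_jordan_identity (hJ : IsJordanBimod act) {qx qy p qt : ZMod 2} {x y t : Kan n F}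
    {u : V0 × V1} (hx : kHomog qx x) (hy : kHomog qy y) (hu : vHomog p u) (ht : kHomog qt t) :
    act (leftAct act (kmul x y) u) t
        + sgn F (qy * p + qy * qt + p * qt) • act (leftAct act (kmul x t) u) y
        + sgn F (qx * qy + qx * p + qx * qt + p * qt) • act (leftAct act (kmul y t) u) x
      = leftAct act (kmul x y) (act u t) + sgn F (qy * p) • act (leftAct act x u) (kmul y t)
        + sgn F (qt * (qy + p)) • leftAct act (kmul x t) (leftAct act y u) := by
  simpa only [emul_inl_inl, emul_inl_inr, emul_inr_inl, Prod.snd_add, Prod.smul_snd] using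
    congrArg Prod.snd (hJ.1.2 qx qy p qt (x, 0) (y, 0) (0, u) (t, 0) ⟨hx, vHomog_zero qx⟩
      ⟨hy, vHomog_zero qy⟩ ⟨kHomog_zero p, hu⟩ ⟨ht, vHomog_zero qt⟩)

lemma act_act_eq_zero_of_vHomog {t : Kan n F}
    (h : ∀ (p : ZMod 2) (u : V0 × V1), vHomog p u → act (act u t) t = 0) (v : V0 × V1) :
    act (act v t) t = 0 := by
  have hv : v = (v.1, 0) + (0, v.2) := by simp
  rw [hv, map_add, LinearMap.add_apply, map_add, LinearMap.add_apply,
    h 0 _ (by simp [vHomog]), h 1 _ (by simp [vHomog]), add_zero]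

lemma act_act_eq_zero_of_kmul_eq_smul (hJ : IsJordanBimod act) (hchar : (2 : F) ≠ 0)
    {qx qy : ZMod 2} {x y t : Kan n F} {ε : F} (hε : ε ≠ 0)
    (hx : kHomog qx x) (hy : kHomog qy y) (ht : kHomog 1 t)
    (hxy : kmul x y = ε • t) (hxt : kmul x t = 0) (hyt : kmul y t = 0) (v : V0 × V1) :
    act (act v t) t = 0 := by
  refine act_act_eq_zero_of_vHomog act (fun p u hu => ?_) v
  have J := act_jordan_identity act hJ hx hy hu ht
  rw [hxy, hxt, hyt, leftAct_of_kHomog_one act (ht.smul ε) hu,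
    leftAct_of_kHomog_one act (ht.smul ε) (vHomog_act act hJ hu ht)] at J
  simp only [leftAct_zero_left, map_zero, LinearMap.zero_apply, smul_zero, add_zero, map_smul,
    LinearMap.smul_apply, sgn_add_one, smul_smul, neg_mul, neg_smul] at J
  exact eq_zero_of_smul_eq_neg_smul hchar (mul_ne_zero (sgn_ne_zero p) hε) J

lemma act_act_eq_zero_of_kmul_eq_smul_of_act_act_eq_zero (hJ : IsJordanBimod act)
    (hchar : (2 : F) ≠ 0) {x y t : Kan n F} {ε μ : F} (hμ : μ ≠ 0)
    (hx : kHomog 1 x) (hy : kHomog 0 y) (ht : kHomog 1 t)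
    (hxy : kmul x y = ε • t) (hxt : kmul x t = 0) (hyt : kmul y t = μ • x)
    (hRt : ∀ u : V0 × V1, act (act u t) t = 0) (v : V0 × V1) :
    act (act v x) x = 0 := by
  refine act_act_eq_zero_of_vHomog act (fun p u hu => ?_) v
  have J := act_jordan_identity act hJ hx hy hu ht
  rw [hxy, hxt, hyt, leftAct_of_kHomog_one act (ht.smul ε) hu,
    leftAct_of_kHomog_one act (ht.smul ε) (vHomog_act act hJ hu ht),
    leftAct_of_kHomog_one act (hx.smul μ) hu, leftAct_of_kHomog_one act hx hu] at J
  simp only [leftAct_zero_left, map_zero, LinearMap.zero_apply, smul_zero, add_zero, map_smul,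
    LinearMap.smul_apply, hRt, zero_add, smul_smul, mul_zero, zero_mul, mul_one, one_mul] at J
  rw [add_right_comm, CharTwo.add_self_eq_zero, zero_add, sgn_zero, sgn_one, neg_one_mul,
    one_mul, neg_smul, mul_comm μ] at J
  exact eq_zero_of_smul_eq_neg_smul hchar (mul_ne_zero (sgn_ne_zero p) hμ) J.symm

end Bimodule

section BasisElements

variable {F : Type} [Field F] {n : ℕ} {V0 V1 : Type} [AddCommGroup V0] [Module F V0]
  [AddCommGroup V1] [Module F V1] {act : V0 × V1 →ₗ[F] Kan n F →ₗ[F] V0 × V1}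

lemma act_act_beK_eq_zero (hJ : IsJordanBimod act) (hchar : (2 : F) ≠ 0)
    {I : Finset (Fin n)} (hI : (#I : ZMod 2) = 0) (hne : I ≠ ∅) (v : V0 × V1) :
    act (act v (beK I)) (beK I) = 0 := by
  have ht : kHomog 1 (beK I : Kan n F) := by simpa [hI] using kHomog_beK (F := F) I
  have hxy : kmul (eK I) (beK ∅) = (gsign I ∅ : F) • (beK I : Kan n F) := by
    simpa using kmul_eK_beK_of_disjoint (F := F) (Finset.disjoint_empty_right I)
  have hxt : kmul (eK I) (beK I) = (0 : Kan n F) :=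
    kmul_eK_beK_of_not_disjoint (by simpa using hne)
  exact act_act_eq_zero_of_kmul_eq_smul act hJ hchar (gsign_cast_ne_zero I ∅) (kHomog_eK I)
    (kHomog_beK ∅) ht hxy hxt (kmul_beK_empty_beK I) v

lemma act_act_eK_eq_zero_of_mem_of_mem (hJ : IsJordanBimod act) (hchar : (2 : F) ≠ 0)
    {I : Finset (Fin n)} (hI : (#I : ZMod 2) = 1) {j k : Fin n} (hj : j ∈ I) (hk : k ∈ I)
    (hjk : j ≠ k) (v : V0 × V1) :
    act (act v (eK I)) (eK I) = 0 := by
  have ht : kHomog 1 (eK I : Kan n F) := hI ▸ kHomog_eK I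
  have hxy : kmul (eK {j}) (eK (I \ {j})) = (gsign {j} (I \ {j}) : F) • (eK I : Kan n F) := by
    rw [kmul_eK_eK_of_disjoint Finset.disjoint_sdiff,
      Finset.union_sdiff_of_subset (Finset.singleton_subset_iff.mpr hj)]
  have hxt : kmul (eK {j}) (eK I) = (0 : Kan n F) :=
    kmul_eK_eK_of_not_disjoint (by simpa using hj)
  have hyt : kmul (eK (I \ {j})) (eK I) = (0 : Kan n F) :=
    kmul_eK_eK_of_not_disjoint (Finset.not_disjoint_iff.mpr ⟨k, by simp [hk, hjk.symm], hk⟩)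
  exact act_act_eq_zero_of_kmul_eq_smul act hJ hchar (gsign_cast_ne_zero _ _) (kHomog_eK _)
    (kHomog_eK _) ht hxy hxt hyt v

lemma act_act_eK_singleton_eq_zero (hJ : IsJordanBimod act) (hchar : (2 : F) ≠ 0)
    {i j : Fin n} (hij : i ≠ j) (v : V0 × V1) :
    act (act v (eK {i})) (eK {i}) = 0 := by
  have hK : #({i, j} : Finset (Fin n)) = 2 := Finset.card_pair hij
  have hx : kHomog 1 (eK {i} : Kan n F) := by simpa using kHomog_eK (F := F) {i}
  have hK2 : (#({i, j} : Finset (Fin n)) : ZMod 2) = 0 := by rw [hK]; rfl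
  have hy : kHomog 0 (beK {j} : Kan n F) := by
    simpa [show (1 + 1 : ZMod 2) = 0 from rfl] using kHomog_beK (F := F) {j}
  have ht : kHomog 1 (beK {i, j} : Kan n F) := by simpa [hK2] using kHomog_beK (F := F) {i, j}
  have hxy : kmul (eK {i}) (beK {j}) = (gsign {i} {j} : F) • (beK {i, j} : Kan n F) := by
    rw [kmul_eK_beK_of_disjoint (by simpa using hij), Finset.insert_eq]
  have hxt : kmul (eK {i}) (beK {i, j}) = (0 : Kan n F) :=
    kmul_eK_beK_of_not_disjoint (by simp)
  have hjK : j ∈ ({i, j} : Finset (Fin n)) := by simp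
  have hyt := kmul_beK_singleton_beK (F := F) hjK
  rw [show ({i, j} : Finset (Fin n)).erase j = {i} by simp [Finset.erase_insert_of_ne hij]] at hyt
  exact act_act_eq_zero_of_kmul_eq_smul_of_act_act_eq_zero act hJ hchar (by simp) hx hy ht
    hxy hxt hyt
    (act_act_beK_eq_zero hJ hchar hK2 (Finset.insert_ne_empty i {j})) v

end BasisElements

/-- for a Jordan bimodule `V` over `Kan(n)`, every odd basis element
`a = e_I` (`|I|` odd) or `a = \bar{e_I}` (`|I|` even, `a ≠ \bar{1}`) satisfies `R_a² = 0`. -/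
theorem odd_square_zero {F : Type} [Field F] (hchar : (2 : F) ≠ 0)
    {n : ℕ} (hn : 2 ≤ n)
    {V0 V1 : Type} [AddCommGroup V0] [Module F V0] [AddCommGroup V1] [Module F V1]
    (act : V0 × V1 →ₗ[F] Kan n F →ₗ[F] V0 × V1) (hJ : IsJordanBimod act) :
    (∀ I : Finset (Fin n), (I.card : ZMod 2) = 1 →
      ∀ v : V0 × V1, act (act v (eK I)) (eK I) = 0) ∧
    (∀ I : Finset (Fin n), (I.card : ZMod 2) = 0 → I ≠ ∅ →
      ∀ v : V0 × V1, act (act v (beK I)) (beK I) = 0) := by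
  refine ⟨fun I hI v => ?_, fun I hI hne v => act_act_beK_eq_zero hJ hchar hI hne v⟩
  obtain ⟨j, hj⟩ : I.Nonempty := Finset.nonempty_iff_ne_empty.mpr (by rintro rfl; simp at hI)
  by_cases hcard : #I = 1
  · obtain ⟨i, rfl⟩ := Finset.card_eq_one.mp hcard
    have : Nontrivial (Fin n) := Fin.nontrivial_iff_two_le.mpr hn
    obtain ⟨k, hik⟩ := exists_ne i
    exact act_act_eK_singleton_eq_zero hJ hchar hik.symm v
  · have : 1 < #I := by have := Finset.card_pos.mpr ⟨j, hj⟩; omega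
    obtain ⟨k, hk, hkj⟩ := Finset.exists_mem_ne this j
    exact act_act_eK_eq_zero_of_mem_of_mem hJ hchar hI hj hk hkj.symm v
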